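/- Let G be a graph with independent core vertices, u and w non-adjacent core-forbidden vertices, and G+e obtained by adding edge e = {u,w}. Then η(G) = η(G+e) if and only if CV(G) = CV(G+e). -/

import Mathlib

open scoped Classical
open Matrix

variable {V : Type*} [Fintype V] [DecidableEq V]

/-- Nullity of a real square matrix: dimension of its kernel. -/
noncomputable def nullity {m : Type*} [Fintype m] (A : Matrix m m ℝ) : ℕ :=
  Module.finrank ℝ (LinearMap.ker A.mulVecLin)

/-- `v` is a core vertex with respect to the symmetric matrix `A`. -/
def IsCore {m : Type*} [Fintype m] (A : Matrix m m ℝ) (v : m) : Prop :=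
  ∃ x : m → ℝ, A.mulVec x = 0 ∧ x v ≠ 0

/-- The perturbation matrix adding the single edge `{u,w}`. -/
def edgeMat (u w : V) : Matrix V V ℝ :=
  Matrix.of fun i j => if (i = u ∧ j = w) ∨ (i = w ∧ j = u) then 1 else 0

/-! Since `u` and `w` are core-forbidden, every kernel vector of `A` vanishes at `u` and `w`,
so it is not seen by the perturbation `edgeMat u w`: hence `ker A ≤ ker (A + edgeMat u w)`, and
the nullities agree iff the kernels agree. Equal kernels give equal core sets; conversely, if the
core sets agree then `u`, `w` are core-forbidden in `A + edgeMat u w` as well, and the same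
argument run backwards gives the reverse inclusion of kernels. -/

section Kernel

variable {m : Type*} [Fintype m]

lemma isCore_iff_of_ker_eq {A B : Matrix m m ℝ}
    (h : LinearMap.ker A.mulVecLin = LinearMap.ker B.mulVecLin) (v : m) :
    IsCore A v ↔ IsCore B v := by
  have hmem : ∀ x, A *ᵥ x = 0 ↔ B *ᵥ x = 0 := fun x => by
    simpa only [LinearMap.mem_ker, mulVecLin_apply] using SetLike.ext_iff.mp h x
  simp only [IsCore, hmem]

lemma apply_eq_zero_of_not_isCore {A : Matrix m m ℝ} {v : m} (hv : ¬ IsCore A v)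
    {x : m → ℝ} (hx : A *ᵥ x = 0) : x v = 0 :=
  not_not.mp fun hxv => hv ⟨x, hx, hxv⟩

lemma nullity_eq_iff_ker_eq {A B : Matrix m m ℝ}
    (h : LinearMap.ker A.mulVecLin ≤ LinearMap.ker B.mulVecLin) :
    nullity A = nullity B ↔ LinearMap.ker A.mulVecLin = LinearMap.ker B.mulVecLin :=
  ⟨Submodule.eq_of_le_of_finrank_eq h, fun hAB => by rw [nullity, nullity, hAB]⟩

end Kernel

lemma edgeMat_mulVec_eq_zero {u w : V} {x : V → ℝ} (hu : x u = 0) (hw : x w = 0) :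
    edgeMat u w *ᵥ x = 0 := by
  funext i
  simp only [edgeMat, mulVec, dotProduct, of_apply, Pi.zero_apply]
  refine Finset.sum_eq_zero fun j _ => ?_
  split_ifs with h
  · rcases h with ⟨-, rfl⟩ | ⟨-, rfl⟩ <;> simp [hu, hw]
  · exact zero_mul _

lemma add_edgeMat_mulVec_of_apply_eq_zero (A : Matrix V V ℝ) {u w : V} {x : V → ℝ}
    (hu : x u = 0) (hw : x w = 0) : (A + edgeMat u w) *ᵥ x = A *ᵥ x := by
  rw [add_mulVec, edgeMat_mulVec_eq_zero hu hw, add_zero]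

lemma ker_le_ker_add_edgeMat {A : Matrix V V ℝ} {u w : V}
    (hu : ¬ IsCore A u) (hw : ¬ IsCore A w) :
    LinearMap.ker A.mulVecLin ≤ LinearMap.ker (A + edgeMat u w).mulVecLin := by
  intro x hx
  rw [LinearMap.mem_ker, mulVecLin_apply] at hx ⊢
  rw [add_edgeMat_mulVec_of_apply_eq_zero A (apply_eq_zero_of_not_isCore hu hx)
    (apply_eq_zero_of_not_isCore hw hx), hx]

lemma ker_add_edgeMat_le_ker {A : Matrix V V ℝ} {u w : V}
    (hu : ¬ IsCore (A + edgeMat u w) u) (hw : ¬ IsCore (A + edgeMat u w) w) :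
    LinearMap.ker (A + edgeMat u w).mulVecLin ≤ LinearMap.ker A.mulVecLin := by
  intro x hx
  rw [LinearMap.mem_ker, mulVecLin_apply] at hx ⊢
  rwa [← add_edgeMat_mulVec_of_apply_eq_zero A (apply_eq_zero_of_not_isCore hu hx)
    (apply_eq_zero_of_not_isCore hw hx)]

theorem stmt_18_general (G : SimpleGraph V) [DecidableRel G.Adj] (u w : V)
    (hu : ¬ IsCore (G.adjMatrix ℝ) u) (hw : ¬ IsCore (G.adjMatrix ℝ) w) :
    nullity (G.adjMatrix ℝ) = nullity ((G.adjMatrix ℝ) + edgeMat u w)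
      ↔ {v : V | IsCore (G.adjMatrix ℝ) v}
          = {v : V | IsCore ((G.adjMatrix ℝ) + edgeMat u w) v} := by
  have hle := ker_le_ker_add_edgeMat hu hw
  rw [nullity_eq_iff_ker_eq hle]
  constructor
  · exact fun hker => Set.ext (isCore_iff_of_ker_eq hker)
  · intro hcore
    have hcore' : ∀ v, IsCore (G.adjMatrix ℝ) v ↔ IsCore (G.adjMatrix ℝ + edgeMat u w) v :=
      fun v => Set.ext_iff.mp hcore v
    exact le_antisymm hle
      (ker_add_edgeMat_le_ker (mt (hcore' u).mpr hu) (mt (hcore' w).mpr hw))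

/-- Adding an edge between two non-adjacent core-forbidden vertices of a graph with
independent core vertices preserves the nullity iff it preserves the core vertex set. -/
theorem stmt_18 (G : SimpleGraph V) [DecidableRel G.Adj] (u w : V)
    (huw : u ≠ w) (hadj : ¬ G.Adj u w)
    (hu : ¬ IsCore (G.adjMatrix ℝ) u) (hw : ¬ IsCore (G.adjMatrix ℝ) w)
    (hind : ∀ a b : V, IsCore (G.adjMatrix ℝ) a → IsCore (G.adjMatrix ℝ) b →
      ¬ G.Adj a b) :
    nullity (G.adjMatrix ℝ) = nullity ((G.adjMatrix ℝ) + edgeMat u w)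
      ↔ {v : V | IsCore (G.adjMatrix ℝ) v}
          = {v : V | IsCore ((G.adjMatrix ℝ) + edgeMat u w) v} :=
  stmt_18_general G u w hu hw
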